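/- Suppose $\phi$ is a modular-symbol-like assignment with values in distributions on $\mathbb{Z}_p$ satisfying the $U_p$-relation $\sum_{a=0}^{p-1}\phi\{\infty, a/p\}|_k\beta_a = \alpha\,\phi\{\infty,0\}$ with $\alpha \neq 0$. Then restricting the distribution $\phi\{\infty,0\}$ to $\mathbb{Z}_p^\times$ satisfies, for each $n \geq 0$, $\phi\{\infty,0\}|_{\mathbb{Z}_p^\times}(z^n) = \left(1 - \frac{p^n}{\alpha}\right)\phi\{\infty,0\}(z^n)$. -/
import Mathlib

/-- Abstract form of the `U_p`-restriction lemma: suppose `μ = φ{∞,0}` and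
`μ_a = φ{∞,a/p}` (`a = 0,…,p-1`) are distributions on `ℤ_p` satisfying the `U_p`-relation
`∑_a (μ_a | β_a) = α μ` with `α ≠ 0`, i.e. `∑_a μ_a(g(a + pz)) = α μ(g)` for all test
functions `g` (note `μ_0 = μ` since `β_0{∞,0} = {∞,0}`).  Then the restriction of `μ` to
`ℤ_p^×` satisfies `μ|_{ℤ_p^×}(z^n) = (1 - p^n/α) μ(z^n)` for every `n ≥ 0`. -/
theorem statement16 (p : ℕ) [Fact p.Prime] [NeZero p] (α : ℚ_[p]) (hα : α ≠ 0)
    (μs : Fin p → ((ℤ_[p] → ℚ_[p]) →ₗ[ℚ_[p]] ℚ_[p]))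
    (μ : (ℤ_[p] → ℚ_[p]) →ₗ[ℚ_[p]] ℚ_[p])
    (h0 : μs 0 = μ)
    (hU : ∀ g : ℤ_[p] → ℚ_[p],
      ∑ a : Fin p, μs a (fun z => g (((a : ℕ) : ℤ_[p]) + (p : ℤ_[p]) * z)) = α * μ g) :
    ∀ n : ℕ,
      μ (Set.indicator {z : ℤ_[p] | IsUnit z} (fun z => (z : ℚ_[p]) ^ n))
        = (1 - (p : ℚ_[p]) ^ n / α) * μ (fun z => (z : ℚ_[p]) ^ n) := by
  intro n
  have hp1 : (1 : ℝ) < p := Nat.one_lt_cast.2 (Fact.out : p.Prime).one_lt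
  have hpnorm : ‖(p : ℤ_[p])‖ < 1 := by
    rw [PadicInt.norm_p]
    exact inv_lt_one_of_one_lt₀ hp1
  -- p*z is never a unit
  have hnonunit : ∀ z : ℤ_[p], ¬ IsUnit ((p : ℤ_[p]) * z) := by
    intro z hz
    have h1 : ‖(p : ℤ_[p]) * z‖ = 1 := PadicInt.isUnit_iff.1 hz
    have hle : ‖(p : ℤ_[p]) * z‖ ≤ ‖(p : ℤ_[p])‖ := by
      rw [norm_mul]
      calc ‖(p : ℤ_[p])‖ * ‖z‖ ≤ ‖(p : ℤ_[p])‖ * 1 :=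
            mul_le_mul_of_nonneg_left z.norm_le_one (norm_nonneg _)
        _ = ‖(p : ℤ_[p])‖ := mul_one _
    linarith
  -- a + p*z is a unit for a ≠ 0
  have hunit : ∀ (a : Fin p), a ≠ 0 → ∀ z : ℤ_[p],
      IsUnit (((a : ℕ) : ℤ_[p]) + (p : ℤ_[p]) * z) := by
    intro a ha z
    have ha' : (a : ℕ) ≠ 0 := fun h => ha (Fin.ext (by simp [h]))
    have hadvd : ¬ ((p : ℤ) ∣ ((a : ℕ) : ℤ)) := by
      intro h
      have := Int.le_of_dvd (by exact_mod_cast Nat.pos_of_ne_zero ha') h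
      have := a.isLt
      omega
    have hanorm : ‖((a : ℕ) : ℤ_[p])‖ = 1 := by
      have h1 : ¬ ‖(((a : ℕ) : ℤ) : ℤ_[p])‖ < 1 := by
        rw [PadicInt.norm_int_lt_one_iff_dvd]; exact_mod_cast hadvd
      have h2 : ‖(((a : ℕ) : ℤ) : ℤ_[p])‖ ≤ 1 := PadicInt.norm_le_one _
      push_cast at h1 h2 ⊢
      linarith
    have hpz : ‖(p : ℤ_[p]) * z‖ < 1 := by
      rw [norm_mul]
      calc ‖(p : ℤ_[p])‖ * ‖z‖ ≤ ‖(p : ℤ_[p])‖ * 1 :=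
            mul_le_mul_of_nonneg_left z.norm_le_one (norm_nonneg _)
        _ = ‖(p : ℤ_[p])‖ := mul_one _
        _ < 1 := hpnorm
    rw [PadicInt.isUnit_iff, PadicInt.norm_add_eq_max_of_ne (by rw [hanorm]; linarith),
      hanorm]
    rw [max_eq_left hpz.le]
  -- apply hU to the indicator of nonunits
  set f : ℤ_[p] → ℚ_[p] := Set.indicator {z : ℤ_[p] | ¬ IsUnit z} (fun z => (z : ℚ_[p]) ^ n)
    with hf
  have key : (p : ℚ_[p]) ^ n * μ (fun z => (z : ℚ_[p]) ^ n) = α * μ f := by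
    rw [← hU f]
    rw [Fintype.sum_eq_single 0]
    · rw [h0]
      have : (fun z : ℤ_[p] => f ((((0 : Fin p) : ℕ) : ℤ_[p]) + (p : ℤ_[p]) * z))
          = fun z : ℤ_[p] => (p : ℚ_[p]) ^ n * (z : ℚ_[p]) ^ n := by
        funext z
        simp only [Fin.val_zero, Nat.cast_zero, zero_add, hf]
        rw [Set.indicator_of_mem
          (show ((p : ℤ_[p]) * z) ∈ {z : ℤ_[p] | ¬ IsUnit z} from hnonunit z)]
        push_cast
        ring
      rw [this]
      exact (map_smul μ ((p : ℚ_[p]) ^ n) (fun z : ℤ_[p] => (z : ℚ_[p]) ^ n)).symm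
    · intro a ha
      have : (fun z : ℤ_[p] => f (((a : ℕ) : ℤ_[p]) + (p : ℤ_[p]) * z)) = 0 := by
        funext z
        exact Set.indicator_of_notMem
          (show (((a : ℕ) : ℤ_[p]) + (p : ℤ_[p]) * z) ∉ {z : ℤ_[p] | ¬ IsUnit z} from
            not_not_intro (hunit a ha z)) _
      rw [this, map_zero]
  -- complement decomposition
  have hsplit : (fun z : ℤ_[p] => (z : ℚ_[p]) ^ n)
      = Set.indicator {z : ℤ_[p] | IsUnit z} (fun z => (z : ℚ_[p]) ^ n) + f := by
    funext z
    simp only [Pi.add_apply, hf, Set.indicator_apply, Set.mem_setOf_eq]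
    by_cases h : IsUnit z <;> simp [h]
  have hμf : μ f = (p : ℚ_[p]) ^ n / α * μ (fun z => (z : ℚ_[p]) ^ n) := by
    rw [div_mul_eq_mul_div, eq_div_iff hα]
    linear_combination -key
  calc μ (Set.indicator {z : ℤ_[p] | IsUnit z} (fun z => (z : ℚ_[p]) ^ n))
      = μ (fun z => (z : ℚ_[p]) ^ n) - μ f := by
        have h2 : μ (fun z : ℤ_[p] => (z : ℚ_[p]) ^ n)
            = μ (Set.indicator {z : ℤ_[p] | IsUnit z} (fun z => (z : ℚ_[p]) ^ n)) + μ f := by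
          conv_lhs => rw [hsplit]
          exact map_add μ _ _
        linear_combination -h2
    _ = (1 - (p : ℚ_[p]) ^ n / α) * μ (fun z => (z : ℚ_[p]) ^ n) := by
        rw [hμf]; ring
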